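/- For every α ∈ [0,1] and every p with 1 < p < ∞, the Bishop operator T_α on L^p([0,1]) is not supercyclic; that is, there is no f ∈ L^p([0,1]) such that the set {λ·T_α^n f : λ ∈ ℂ, n ≥ 0} is dense in L^p([0,1]). -/

import Mathlib

open MeasureTheory Set Filter Topology Polynomial
open scoped ENNReal NNReal

/-- Lebesgue measure restricted to `[0,1]`. -/
noncomputable def μ01 : Measure ℝ := volume.restrict (Set.Icc 0 1)

/-- `T` is the Bishop operator `T_α` on `L^p([0,1])`, i.e.
`(T f)(x) = x · f({x + α})` for a.e. `x ∈ [0,1]`, where `{·}` is the fractional part. -/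
def IsBishopOp (p : ℝ≥0∞) [Fact (1 ≤ p)] (α : ℝ)
    (T : Lp ℂ p μ01 →L[ℂ] Lp ℂ p μ01) : Prop :=
  ∀ f : Lp ℂ p μ01, ∀ᵐ x ∂μ01, (T f) x = (x : ℂ) * f (Int.fract (x + α))

/-- `T` is the weighted translation operator `T_{φ,α}` on `L^p([0,1])`, i.e.
`(T f)(x) = φ(x) · f({x + α})` for a.e. `x ∈ [0,1]`. -/
def IsWTOp (p : ℝ≥0∞) [Fact (1 ≤ p)] (φ : ℝ → ℂ) (α : ℝ)
    (T : Lp ℂ p μ01 →L[ℂ] Lp ℂ p μ01) : Prop :=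
  ∀ f : Lp ℂ p μ01, ∀ᵐ x ∂μ01, (T f) x = φ x * f (Int.fract (x + α))

/-!
Suppose `c₁ • T^n f` and `c₂ • T^m f` with `n < m` are both close to the constant `1`; such a pair
exists because a dense set stays dense after removing finitely many lines. With `N = m - n`,
`τ x = {x + Nα}` (which preserves `μ01`) and `W x = ∏_{k<N} {x + kα}`, almost everywhere
`T^m f = W · (T^n f) ∘ τ`, so off a set of small measure (Chebyshev) `W` lies in a band `[A, B]`
with `B / A` close to `1`. But away from at most `N` breakpoints every factor of `W` has slope `1`
and values below `1`, so `log W` increases at rate at least `N`; hence `W` meets the band only on a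
set of measure at most `2 log (B / A)`, and the three small sets cannot cover `[0, 1]`.
-/

instance : IsProbabilityMeasure μ01 :=
  ⟨by simp [μ01]⟩

lemma μ01_eq_restrict_Ico : μ01 = volume.restrict (Ico 0 1) :=
  Measure.restrict_congr_set Ico_ae_eq_Icc.symm

lemma μ01_eq_restrict_Ioc : μ01 = volume.restrict (Ioc 0 1) :=
  Measure.restrict_congr_set Ioc_ae_eq_Icc.symm

lemma ae_mem_Ico_μ01 : ∀ᵐ x ∂μ01, x ∈ Ico (0 : ℝ) 1 :=
  μ01_eq_restrict_Ico ▸ ae_restrict_mem measurableSet_Ico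

lemma μ01_Ioo {a b : ℝ} (ha : 0 ≤ a) (hb : b ≤ 1) : μ01 (Ioo a b) = ENNReal.ofReal (b - a) := by
  rw [μ01, Measure.restrict_apply measurableSet_Ioo,
    inter_eq_left.2 (Ioo_subset_Icc_self.trans (Icc_subset_Icc ha hb)), Real.volume_Ioo]

section FloorRing

variable {R : Type*} [Field R] [LinearOrder R] [IsStrictOrderedRing R] [FloorRing R]

lemma Int.fract_fract_add (a b : R) : Int.fract (Int.fract a + b) = Int.fract (a + b) :=
  Int.fract_eq_fract.2 ⟨-⌊a⌋, by rw [Int.fract]; push_cast; ring⟩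

/-- On `[0, 1]`, the point `1 - {c}` is the only place where `x + c` crosses an integer. -/
lemma Int.fract_add_sub_fract_add {x y c : R} (hx : 0 ≤ x) (hxy : x ≤ y) (hy : y ≤ 1)
    (hc : 1 - Int.fract c ∉ Ioc x y) : Int.fract (y + c) - Int.fract (x + c) = y - x := by
  suffices h : ⌊x + c⌋ = ⌊y + c⌋ by
    rw [Int.fract, Int.fract, h]
    ring
  refine le_antisymm (Int.floor_mono (by linarith)) (not_lt.1 fun hlt => hc ?_)
  have h₁ : x + c < ⌊y + c⌋ := Int.floor_lt.1 hlt
  have h₂ : (⌊y + c⌋ : R) ≤ y + c := Int.floor_le _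
  have h₃ : ⌊y + c⌋ = ⌊c⌋ + 1 := by
    have : ⌊c⌋ < ⌊y + c⌋ := Int.floor_lt.2 (by linarith)
    have : ⌊y + c⌋ - 1 ≤ ⌊c⌋ := Int.le_floor.2 (by push_cast; linarith)
    omega
  rw [h₃] at h₁ h₂
  push_cast at h₁ h₂
  rw [Int.fract]
  constructor <;> linarith

end FloorRing

lemma AddCircle.fract_equivIoc_coe (y : ℝ) :
    Int.fract (AddCircle.equivIoc 1 0 (y : AddCircle (1 : ℝ)) : ℝ) = Int.fract y := by
  obtain ⟨k, hk⟩ := AddSubgroup.mem_zmultiples_iff.1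
    (QuotientAddGroup.eq.1 (AddCircle.coe_equivIoc (p := (1 : ℝ)) (a := 0) (y := y)))
  exact Int.fract_eq_fract.2 ⟨-k, by simp only [zsmul_eq_mul, mul_one] at hk; push_cast; linarith⟩

/-- Read on the circle `ℝ / ℤ`, the map is the rotation by `θ`. -/
lemma measurePreserving_fract_add (θ : ℝ) :
    MeasurePreserving (fun x => Int.fract (x + θ)) μ01 μ01 := by
  have hfract : MeasurePreserving Int.fract μ01 μ01 :=
    (MeasurePreserving.id μ01).congr measurable_fract
      (ae_mem_Ico_μ01.mono fun x hx => (Int.fract_eq_self.2 hx).symm)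
  have hcircle : MeasurePreserving
      (fun x : ℝ => (AddCircle.equivIoc 1 0 (x + θ : AddCircle (1 : ℝ)) : ℝ)) μ01 μ01 := by
    have := (measurePreserving_subtype_coe (measurableSet_Ioc (a := (0 : ℝ)) (b := 0 + 1))).comp
      ((AddCircle.measurePreserving_equivIoc 1 (a := 0)).comp
        ((measurePreserving_add_right volume (θ : AddCircle (1 : ℝ))).comp
          (AddCircle.measurePreserving_mk 1 0)))
    rwa [show volume.restrict (Ioc (0 : ℝ) (0 + 1)) = μ01 by rw [zero_add, μ01_eq_restrict_Ioc]]
      at this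
  convert hfract.comp hcircle using 1
  funext x
  simp only [Function.comp_apply, ← AddCircle.coe_add, AddCircle.fract_equivIoc_coe]

noncomputable def bishopWeight (α : ℝ) (N : ℕ) (x : ℝ) : ℝ :=
  ∏ k ∈ Finset.range N, Int.fract (x + k * α)

lemma bishopWeight_nonneg (α : ℝ) (N : ℕ) (x : ℝ) : 0 ≤ bishopWeight α N x :=
  Finset.prod_nonneg fun _ _ => Int.fract_nonneg _

theorem IsBishopOp.pow_apply {p : ℝ≥0∞} [Fact (1 ≤ p)] {α : ℝ}
    {T : Lp ℂ p μ01 →L[ℂ] Lp ℂ p μ01} (hT : IsBishopOp p α T) (N : ℕ) (f : Lp ℂ p μ01) :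
    ∀ᵐ x ∂μ01, (T ^ N) f x = bishopWeight α N x * f (Int.fract (x + N * α)) := by
  induction N generalizing f with
  | zero =>
    filter_upwards [ae_mem_Ico_μ01] with x hx
    simp [bishopWeight, Int.fract_eq_self.2 hx]
  | succ N ih =>
    filter_upwards [ih (T f),
      (measurePreserving_fract_add (N * α)).quasiMeasurePreserving.ae (hT f)] with x hN h1
    rw [pow_succ, mul_apply_eq_comp, hN, h1, Int.fract_fract_add, bishopWeight, bishopWeight,
      Finset.prod_range_succ, Nat.cast_succ, add_one_mul, ← add_assoc]
    push_cast
    ring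

lemma Real.sub_le_log_sub_log {u v : ℝ} (hu : 0 < u) (huv : u ≤ v) (hv : v ≤ 1) :
    v - u ≤ Real.log v - Real.log u := by
  have hv0 : 0 < v := hu.trans_le huv
  have h := Real.one_sub_inv_le_log_of_pos (div_pos hv0 hu)
  rw [Real.log_div hv0.ne' hu.ne', inv_div] at h
  have : v - u ≤ 1 - u / v := by
    rw [one_sub_div hv0.ne', le_div_iff₀ hv0]
    nlinarith
  linarith

lemma mul_sub_le_log_bishopWeight_sub {α x y : ℝ} {N : ℕ} (hx : 0 ≤ x) (hxy : x ≤ y) (hy : y ≤ 1)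
    (hW : 0 < bishopWeight α N x) (hD : ∀ k < N, 1 - Int.fract (k * α) ∉ Ioc x y) :
    N * (y - x) ≤ Real.log (bishopWeight α N y) - Real.log (bishopWeight α N x) := by
  have hpos : ∀ k ∈ Finset.range N, 0 < Int.fract (x + k * α) := fun k hk =>
    (Int.fract_nonneg _).lt_of_ne' (Finset.prod_ne_zero_iff.1 hW.ne' k hk)
  have hshift : ∀ k ∈ Finset.range N,
      Int.fract (y + k * α) - Int.fract (x + k * α) = y - x := fun k hk =>
    Int.fract_add_sub_fract_add hx hxy hy (hD k (Finset.mem_range.1 hk))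
  have hstep : ∀ k ∈ Finset.range N,
      y - x ≤ Real.log (Int.fract (y + k * α)) - Real.log (Int.fract (x + k * α)) := by
    intro k hk
    rw [← hshift k hk]
    exact Real.sub_le_log_sub_log (hpos k hk) (by linarith [hshift k hk]) (Int.fract_lt_one _).le
  have hpos' : ∀ k ∈ Finset.range N, Int.fract (y + k * α) ≠ 0 := fun k hk =>
    ((hpos k hk).trans_le (by linarith [hshift k hk])).ne'
  rw [bishopWeight, bishopWeight, Real.log_prod hpos', Real.log_prod fun k hk => (hpos k hk).ne',
    ← Finset.sum_sub_distrib]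
  have hsum := Finset.sum_le_sum hstep
  rwa [Finset.sum_const, Finset.card_range, nsmul_eq_mul] at hsum

lemma Real.volume_le_of_forall_sub_le {S : Set ℝ} {ℓ : ℝ}
    (h : ∀ x ∈ S, ∀ y ∈ S, x ≤ y → y - x ≤ ℓ) : volume S ≤ ENNReal.ofReal ℓ := by
  refine (Real.volume_le_diam S).trans (Metric.ediam_le fun x hx y hy => ?_)
  rw [edist_dist, Real.dist_eq]
  refine ENNReal.ofReal_le_ofReal ?_
  rcases le_total x y with hxy | hxy
  · rw [abs_sub_comm, abs_of_nonneg (by linarith)]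
    exact h x hx y hy hxy
  · rw [abs_of_nonneg (by linarith)]
    exact h y hy x hx hxy

lemma Real.volume_le_card_add_one_mul {S : Set ℝ} {D : Finset ℝ} {ℓ : ℝ}
    (h : ∀ x ∈ S, ∀ y ∈ S, x ≤ y → (∀ d ∈ D, d ∉ Ioc x y) → y - x ≤ ℓ) :
    volume S ≤ (D.card + 1) * ENNReal.ofReal ℓ := by
  classical
  induction D using Finset.induction_on_max generalizing S with
  | empty =>
    simpa using Real.volume_le_of_forall_sub_le fun x hx y hy hxy => h x hx y hy hxy (by simp)
  | insert a D ha ih =>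
    have hlow : volume (S ∩ Iio a) ≤ (D.card + 1) * ENNReal.ofReal ℓ :=
      ih fun x hx y hy hxy hD => h x hx.1 y hy.1 hxy fun d hd => by
        rcases Finset.mem_insert.1 hd with rfl | hd
        · exact fun hmem => (lt_irrefl d) (hmem.2.trans_lt hy.2)
        · exact hD d hd
    have hhigh : volume (S ∩ Ici a) ≤ ENNReal.ofReal ℓ :=
      Real.volume_le_of_forall_sub_le fun x hx y hy hxy => h x hx.1 y hy.1 hxy fun d hd hmem => by
        rcases Finset.mem_insert.1 hd with rfl | hd
        · exact (lt_irrefl d) (hx.2.trans_lt hmem.1)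
        · exact (lt_irrefl d) ((ha d hd).trans_le hx.2 |>.trans hmem.1)
    calc volume S ≤ volume (S ∩ Iio a) + volume (S ∩ Ici a) := by
          refine (measure_mono fun x hx => ?_).trans (measure_union_le _ _)
          exact (lt_or_ge x a).imp (⟨hx, ·⟩) (⟨hx, ·⟩)
      _ ≤ (D.card + 1) * ENNReal.ofReal ℓ + ENNReal.ofReal ℓ := add_le_add hlow hhigh
      _ = ((insert a D).card + 1) * ENNReal.ofReal ℓ := by
          rw [Finset.card_insert_of_notMem fun h => lt_irrefl a (ha a h)]
          push_cast
          ring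

theorem volume_bishopWeight_mem_Icc_le (α : ℝ) {N : ℕ} (hN : 1 ≤ N) {A B : ℝ} (hA : 0 < A)
    (hAB : A ≤ B) :
    volume {x ∈ Icc 0 1 | bishopWeight α N x ∈ Icc A B} ≤
      ENNReal.ofReal (2 * (Real.log B - Real.log A)) := by
  classical
  have hN' : (1 : ℝ) ≤ N := by exact_mod_cast hN
  have hlog : 0 ≤ Real.log B - Real.log A := sub_nonneg.2 (Real.log_le_log hA hAB)
  set D := (Finset.range N).image fun k : ℕ => 1 - Int.fract (k * α)
  have hcover := Real.volume_le_card_add_one_mul (D := D)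
    (S := {x ∈ Icc 0 1 | bishopWeight α N x ∈ Icc A B}) (ℓ := (Real.log B - Real.log A) / N)
    fun x hx y hy hxy hD => by
      have hgrowth := mul_sub_le_log_bishopWeight_sub hx.1.1 hxy hy.1.2 (hA.trans_le hx.2.1)
        fun k hk => hD _ (Finset.mem_image_of_mem _ (Finset.mem_range.2 hk))
      rw [le_div_iff₀ (by positivity), mul_comm]
      linarith [Real.log_le_log hA hx.2.1, Real.log_le_log (hA.trans_le hy.2.1) hy.2.2]
  refine hcover.trans ?_
  calc ((D.card : ℝ≥0∞) + 1) * ENNReal.ofReal ((Real.log B - Real.log A) / N)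
      ≤ (N + 1) * ENNReal.ofReal ((Real.log B - Real.log A) / N) := by
        gcongr
        exact_mod_cast Finset.card_image_le.trans (Finset.card_range N).le
    _ = ENNReal.ofReal ((N + 1) * ((Real.log B - Real.log A) / N)) := by
        rw [ENNReal.ofReal_mul (by positivity)]
        norm_cast
    _ ≤ ENNReal.ofReal (2 * (Real.log B - Real.log A)) := by
        refine ENNReal.ofReal_le_ofReal ?_
        rw [mul_div_assoc', div_le_iff₀ (by positivity)]
        nlinarith

lemma mem_Icc_of_eq_mul_mul {a b r w t : ℝ} (hr : 0 < r) (ht1 : t < 1) (ha : |a - 1| < t)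
    (hb : |b - 1| < t) (h : a = r * w * b) :
    w ∈ Icc ((1 - t) / (r * (1 + t))) ((1 + t) / (r * (1 - t))) := by
  obtain ⟨ha₁, ha₂⟩ := abs_lt.1 ha
  obtain ⟨hb₁, hb₂⟩ := abs_lt.1 hb
  have hw : w = a / (r * b) := by
    rw [h]
    field_simp [show b ≠ 0 by linarith]
  rw [hw]
  constructor
  · exact div_le_div₀ (by linarith) (by linarith) (by nlinarith) (by nlinarith)
  · exact div_le_div₀ (by linarith) (by linarith) (by nlinarith) (by nlinarith)

theorem one_le_measure_add_measure_add_log {α r t : ℝ} {N : ℕ} (hN : 1 ≤ N) (hr : 0 < r)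
    (ht : 0 ≤ t) (ht1 : t < 1) {g h : ℝ → ℂ}
    (hgh : ∀ᵐ x ∂μ01, ‖g x‖ = r * bishopWeight α N x * ‖h (Int.fract (x + N * α))‖) :
    1 ≤ μ01 {x | t ≤ ‖g x - 1‖} + μ01 {x | t ≤ ‖h x - 1‖} +
      ENNReal.ofReal (4 * Real.log ((1 + t) / (1 - t))) := by
  set A := (1 - t) / (r * (1 + t))
  set B := (1 + t) / (r * (1 - t))
  set band := {x ∈ Icc 0 1 | bishopWeight α N x ∈ Icc A B}
  have hA : 0 < A := div_pos (by linarith) (by positivity)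
  have hAB : A ≤ B := div_le_div₀ (by linarith) (by linarith)
    (mul_pos hr (by linarith)) (by nlinarith)
  have hlog : Real.log B - Real.log A = 2 * Real.log ((1 + t) / (1 - t)) := by
    have h₁ : (1 : ℝ) - t ≠ 0 := by linarith
    have h₂ : (1 : ℝ) + t ≠ 0 := by linarith
    simp only [A, B, Real.log_div, Real.log_mul, h₁, h₂, hr.ne', ne_eq, mul_eq_zero, or_self,
      not_false_eq_true]
    ring
  have hband : μ01 band ≤ ENNReal.ofReal (4 * Real.log ((1 + t) / (1 - t))) := by
    refine (Measure.restrict_le_self _).trans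
      ((volume_bishopWeight_mem_Icc_le α hN hA hAB).trans ?_)
    rw [hlog, ← mul_assoc]
    norm_num
  have hcover : ∀ᵐ x ∂μ01, x ∈ {x | t ≤ ‖g x - 1‖} ∪
      (fun x => Int.fract (x + N * α)) ⁻¹' {x | t ≤ ‖h x - 1‖} ∪ band := by
    filter_upwards [hgh, ae_restrict_mem measurableSet_Icc] with x hx hIcc
    by_contra hbad
    simp only [mem_union, mem_ofPred_eq, mem_preimage, not_or, not_le] at hbad
    obtain ⟨⟨hg, hh⟩, hW⟩ := hbad
    have near_one : ∀ z : ℂ, ‖z - 1‖ < t → |‖z‖ - 1| < t := fun z hz =>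
      (norm_one (α := ℂ) ▸ abs_norm_sub_norm_le z 1).trans_lt hz
    exact hW ⟨hIcc, mem_Icc_of_eq_mul_mul hr ht1 (near_one _ hg) (near_one _ hh) hx⟩
  calc 1 = μ01 univ := measure_univ.symm
    _ ≤ μ01 ({x | t ≤ ‖g x - 1‖} ∪
          (fun x => Int.fract (x + N * α)) ⁻¹' {x | t ≤ ‖h x - 1‖} ∪ band) :=
        measure_mono_ae (hcover.mono fun x hx _ => hx)
    _ ≤ μ01 {x | t ≤ ‖g x - 1‖} +
          μ01 ((fun x => Int.fract (x + N * α)) ⁻¹' {x | t ≤ ‖h x - 1‖}) + μ01 band :=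
        (measure_union_le _ _).trans (add_le_add_left (measure_union_le _ _) _)
    _ ≤ _ := add_le_add (add_le_add_right ((measurePreserving_fract_add _).measure_preimage_le _) _)
        hband

lemma Lp.measure_norm_ge_le {α E : Type*} [MeasurableSpace α] {μ : Measure α}
    [NormedAddCommGroup E] {p : ℝ≥0∞} (hp₀ : p ≠ 0) (hp : p ≠ ∞) (d : Lp E p μ) {t : ℝ}
    (ht : 0 < t) : μ {x | t ≤ ‖d x‖} ≤ ENNReal.ofReal (‖d‖ / t) ^ p.toReal := by
  have h := meas_ge_le_mul_pow_eLpNorm_enorm μ hp₀ hp (Lp.aestronglyMeasurable d)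
    (ENNReal.ofReal_pos.2 ht).ne' (fun h => absurd h ENNReal.ofReal_ne_top)
  simp_rw [← ofReal_norm, ENNReal.ofReal_le_ofReal_iff (norm_nonneg _)] at h
  refine h.trans_eq ?_
  rw [← ENNReal.mul_rpow_of_nonneg _ _ ENNReal.toReal_nonneg, ENNReal.ofReal_div_of_pos ht,
    ENNReal.div_eq_inv_mul, Lp.norm_def, ENNReal.ofReal_toReal (Lp.eLpNorm_ne_top d)]

lemma Lp.measure_norm_sub_ge_le {α E : Type*} [MeasurableSpace α] {μ : Measure α}
    [IsFiniteMeasure μ] [NormedAddCommGroup E] {p : ℝ≥0∞} [Fact (1 ≤ p)] (hp : p ≠ ∞)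
    (g : Lp E p μ) (c : E) {t : ℝ} (ht : 0 < t) (hgt : ‖g - Lp.const p μ c‖ ≤ t) :
    μ {x | t ≤ ‖g x - c‖} ≤ ENNReal.ofReal (‖g - Lp.const p μ c‖ / t) := by
  have hae : ∀ᵐ x ∂μ, (g - Lp.const p μ c : Lp E p μ) x = g x - c := by
    filter_upwards [Lp.coeFn_sub g (Lp.const p μ c), Lp.coeFn_const p μ c] with x h₁ h₂
    rw [h₁, Pi.sub_apply, h₂, Function.const_apply]
  have hp₁ : 1 ≤ p.toReal := by simpa using ENNReal.toReal_mono hp (Fact.out : 1 ≤ p)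
  refine (measure_mono_ae (hae.mono fun x hx h => ?_)).trans
    ((Lp.measure_norm_ge_le (zero_lt_one.trans_le Fact.out).ne' hp _ ht).trans
      (ENNReal.rpow_le_self_of_le_one (ENNReal.ofReal_le_one.2 ?_) hp₁))
  · show t ≤ ‖_‖
    rwa [hx]
  · rwa [div_le_one ht]

lemma Lp.span_singleton_ne_top {α : Type*} [MeasurableSpace α] {μ : Measure α} {p : ℝ≥0∞}
    {s t : Set α} (hs : MeasurableSet s) (ht : MeasurableSet t) (hst : Disjoint s t)
    (hμs : μ s ≠ 0) (hμt : μ t ≠ 0) (hμs' : μ s ≠ ∞) (hμt' : μ t ≠ ∞) (g : Lp ℂ p μ) :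
    (ℂ ∙ g) ≠ ⊤ := by
  intro htop
  obtain ⟨a, ha⟩ := Submodule.mem_span_singleton.1
    (htop ▸ Submodule.mem_top : indicatorConstLp p hs hμs' (1 : ℂ) ∈ ℂ ∙ g)
  obtain ⟨b, hb⟩ := Submodule.mem_span_singleton.1
    (htop ▸ Submodule.mem_top : indicatorConstLp p ht hμt' (1 : ℂ) ∈ ℂ ∙ g)
  have hae : ∀ᵐ x ∂μ, a * g x = s.indicator 1 x ∧ b * g x = t.indicator 1 x := by
    filter_upwards [Lp.coeFn_smul a g, Lp.coeFn_smul b g,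
      indicatorConstLp_coeFn (hs := hs) (hμs := hμs') (c := (1 : ℂ)) (p := p),
      indicatorConstLp_coeFn (hs := ht) (hμs := hμt') (c := (1 : ℂ)) (p := p)] with x h₁ h₂ h₃ h₄
    rw [← ha, h₁] at h₃
    rw [← hb, h₂] at h₄
    exact ⟨h₃, h₄⟩
  obtain ⟨x, hxs, hx₁, hx₂⟩ :=
    Measure.exists_mem_of_measure_ne_zero_of_ae hμs (ae_restrict_of_ae hae)
  obtain ⟨y, hyt, -, hy⟩ := Measure.exists_mem_of_measure_ne_zero_of_ae hμt (ae_restrict_of_ae hae)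
  simp only [indicator_of_mem hxs, indicator_of_notMem (hst.notMem_of_mem_left hxs)] at hx₁ hx₂
  have hb0 : b = 0 := (mul_eq_zero.1 hx₂).resolve_right fun h => by simp [h] at hx₁
  simp [indicator_of_mem hyt, hb0] at hy

lemma Lp.span_singleton_ne_top_μ01 {p : ℝ≥0∞} (g : Lp ℂ p μ01) : (ℂ ∙ g) ≠ ⊤ :=
  Lp.span_singleton_ne_top measurableSet_Ioo measurableSet_Ioo
    (Set.disjoint_left.2 fun x hx hx' => (hx.2.trans hx'.1).false)
    (by norm_num [μ01_Ioo]) (by norm_num [μ01_Ioo]) (measure_ne_top _ _) (measure_ne_top _ _) g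
    (s := Ioo 0 (1 / 2)) (t := Ioo (1 / 2) 1)

theorem Dense.smul_tail {𝕜 E : Type*} [NontriviallyNormedField 𝕜] [CompleteSpace 𝕜]
    [NormedAddCommGroup E] [NormedSpace 𝕜 E] (hE : ∀ g : E, (𝕜 ∙ g) ≠ ⊤) {v : ℕ → E}
    (hv : Dense {x | ∃ (c : 𝕜) (k : ℕ), c • v k = x}) (n : ℕ) :
    Dense {x | ∃ (c : 𝕜) (k : ℕ), n ≤ k ∧ c • v k = x} := by
  induction n with
  | zero =>
    refine hv.mono ?_
    rintro x ⟨c, k, hx⟩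
    exact ⟨c, k, k.zero_le, hx⟩
  | succ n ih =>
    have hline : Dense ((𝕜 ∙ v n : Set E)ᶜ) := by
      refine interior_eq_empty_iff_dense_compl.1 (not_nonempty_iff_eq_empty.1 fun hne => ?_)
      exact hE _ ((𝕜 ∙ v n).eq_top_of_nonempty_interior' hne)
    refine (ih.inter_of_isOpen_right hline
      (Submodule.closed_of_finiteDimensional _).isOpen_compl).mono ?_
    rintro _ ⟨⟨c, k, hk, rfl⟩, hx⟩
    show ∃ c' k', n + 1 ≤ k' ∧ c' • v k' = c • v k
    refine ⟨c, k, Nat.succ_le_of_lt (hk.lt_of_ne ?_), rfl⟩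
    rintro rfl
    exact hx (Submodule.smul_mem _ c (Submodule.mem_span_singleton_self _))

/-- At the threshold `1 / 20`, Chebyshev bounds each of the two sets where an approximation is far
from `1` by `1 / 8`, and the band costs at most `4 log (21 / 19) ≤ 8 / 19`; these do not add up
to `1`. -/
theorem IsBishopOp.false_of_approx_const {p : ℝ≥0∞} [Fact (1 ≤ p)] (hp : p ≠ ∞) {α : ℝ}
    {T : Lp ℂ p μ01 →L[ℂ] Lp ℂ p μ01} (hT : IsBishopOp p α T) (f : Lp ℂ p μ01) {n m : ℕ}
    (hnm : n < m) {c₁ c₂ : ℂ} (h₁ : ‖c₁ • (T ^ n) f - Lp.const p μ01 1‖ < 1 / 160)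
    (h₂ : ‖c₂ • (T ^ m) f - Lp.const p μ01 1‖ < 1 / 160) : False := by
  have hone : ‖Lp.const p μ01 (1 : ℂ)‖ = 1 := by
    simp [Lp.norm_const' _ _ _ (zero_lt_one.trans_le Fact.out).ne' hp]
  have hc : ∀ {c : ℂ} {k : ℕ}, ‖c • (T ^ k) f - Lp.const p μ01 1‖ < 1 / 160 → c ≠ 0 := by
    rintro c k h rfl
    rw [zero_smul, zero_sub, norm_neg, hone] at h
    norm_num at h
  have hbad : ∀ {g : Lp ℂ p μ01}, ‖g - Lp.const p μ01 1‖ < 1 / 160 →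
      μ01 {x | 1 / 20 ≤ ‖g x - 1‖} ≤ ENNReal.ofReal (1 / 8) := fun h =>
    (Lp.measure_norm_sub_ge_le hp _ 1 (by norm_num) (by linarith)).trans
      (ENNReal.ofReal_le_ofReal (by rw [div_le_iff₀ (by norm_num)]; linarith))
  obtain ⟨N, rfl⟩ := Nat.exists_eq_add_of_lt hnm
  have hrel : ∀ᵐ x ∂μ01, ‖(c₂ • (T ^ (n + N + 1)) f) x‖ = ‖c₂‖ / ‖c₁‖ *
      bishopWeight α (N + 1) x * ‖(c₁ • (T ^ n) f) (Int.fract (x + (N + 1 : ℕ) * α))‖ := by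
    filter_upwards [hT.pow_apply (N + 1) ((T ^ n) f), Lp.coeFn_smul c₂ ((T ^ (n + N + 1)) f),
      (measurePreserving_fract_add _).quasiMeasurePreserving.ae (Lp.coeFn_smul c₁ ((T ^ n) f))]
      with x hx hs₂ hs₁
    rw [hs₂, hs₁, Pi.smul_apply, Pi.smul_apply, add_assoc, add_comm n, pow_add, mul_apply_eq_comp,
      hx, norm_smul, norm_smul, norm_mul, Complex.norm_real,
      Real.norm_of_nonneg (bishopWeight_nonneg _ _ _)]
    field_simp [norm_ne_zero_iff.2 (hc h₁)]
  have hcover := one_le_measure_add_measure_add_log (Nat.le_add_left 1 N)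
    (div_pos (norm_pos_iff.2 (hc h₂)) (norm_pos_iff.2 (hc h₁))) (t := 1 / 20) (by norm_num)
    (by norm_num) hrel
  have hlog : Real.log ((1 + 1 / 20) / (1 - 1 / 20)) ≤ 2 / 19 := by
    refine (Real.log_le_sub_one_of_pos (by norm_num)).trans_eq ?_
    norm_num
  have : (1 : ℝ≥0∞) ≤ ENNReal.ofReal (1 / 8 + 1 / 8 + 4 * (2 / 19)) := by
    refine hcover.trans ?_
    rw [ENNReal.ofReal_add (by norm_num) (by norm_num),
      ENNReal.ofReal_add (by norm_num) (by norm_num)]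
    gcongr
    exacts [hbad h₂, hbad h₁]
  rw [ENNReal.one_le_ofReal] at this
  norm_num at this

theorem bishop_not_supercyclic_general (p : ℝ≥0∞) [Fact (1 ≤ p)] (hp' : p ≠ ∞)
    (α : ℝ)
    (T : Lp ℂ p μ01 →L[ℂ] Lp ℂ p μ01) (hT : IsBishopOp p α T) :
    ¬ ∃ f : Lp ℂ p μ01,
      Dense {g : Lp ℂ p μ01 | ∃ (c : ℂ) (n : ℕ), c • (T ^ n) f = g} := by
  rintro ⟨f, hf⟩
  have htail := hf.smul_tail Lp.span_singleton_ne_top_μ01 (v := fun k => (T ^ k) f)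
  obtain ⟨_, ⟨c₁, n, -, rfl⟩, h₁⟩ :=
    (htail 0).exists_dist_lt (Lp.const p μ01 1) (by norm_num : (0 : ℝ) < 1 / 160)
  obtain ⟨_, ⟨c₂, m, hnm, rfl⟩, h₂⟩ :=
    (htail (n + 1)).exists_dist_lt (Lp.const p μ01 1) (by norm_num : (0 : ℝ) < 1 / 160)
  rw [dist_comm, dist_eq_norm] at h₁ h₂
  exact hT.false_of_approx_const hp' f hnm h₁ h₂

/-- For every `α ∈ [0,1]` and `1 < p < ∞`, the Bishop operator `T_α`
on `L^p([0,1])` is not supercyclic: there is no `f` such that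
`{λ·T_α^n f : λ ∈ ℂ, n ≥ 0}` is dense in `L^p([0,1])`. -/
theorem bishop_not_supercyclic (p : ℝ≥0∞) [Fact (1 ≤ p)] (hp : 1 < p) (hp' : p ≠ ∞)
    (α : ℝ) (hα : α ∈ Set.Icc (0 : ℝ) 1)
    (T : Lp ℂ p μ01 →L[ℂ] Lp ℂ p μ01) (hT : IsBishopOp p α T) :
    ¬ ∃ f : Lp ℂ p μ01,
      Dense {g : Lp ℂ p μ01 | ∃ (c : ℂ) (n : ℕ), c • (T ^ n) f = g} :=
  bishop_not_supercyclic_general p hp' α T hT
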